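/- arXiv:2212.08421 — 6 statements merged into one kernel-verified Lean document; each statement's English description precedes it below -/
import Mathlib

section
/- Let H be a complex Hilbert space, let T be a bounded self-adjoint operator on H and let A be a compact self-adjoint operator on H such that T ∘ T = 16·I + A ∘ A. Then there exist bounded self-adjoint idempotent operators P₊ and P₋ on H (orthogonal projections) with P₊ + P₋ = I and P₊ ∘ P₋ = 0, and a compact self-adjoint operator K on H, such that T = 4·P₊ − 4·P₋ + K. -/
/-!
Since `T² = 16 + A² ≥ 16`, the operator `T` is invertible, so the step function `1_{(0,∞)}` is
continuous on its spectrum and `P₊ := 1_{(0,∞)}(T)` is an orthogonal projection commuting with `T`.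
The symmetry `S := 2P₊ - 1` satisfies `S² = 1`, hence `(T - 4S)(T + 4S) = T² - 16 = A²`, and
`T + 4S = φ(T)` with `|φ(x)| = |x| + 4` is invertible. So `K := T - 4S = A² (T + 4S)⁻¹` is compact.
-/

lemma continuousOn_ite_pos_of_zero_notMem {s : Set ℝ} (hs : (0 : ℝ) ∉ s) (c d : ℝ) :
    ContinuousOn (fun x : ℝ => if 0 < x then c else d) s := by
  refine ContinuousOn.if (fun x hx => ?_) continuousOn_const continuousOn_const
  obtain ⟨hxs, hx0⟩ := hx
  rw [show {x : ℝ | 0 < x} = Set.Ioi 0 from rfl, frontier_Ioi, Set.mem_singleton_iff] at hx0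
  exact absurd (hx0 ▸ hxs) hs

lemma Commute.sub_smul_mul_add_smul {R A : Type*} [CommRing R] [Ring A] [Algebra R A]
    {a s : A} (has : Commute a s) (hs : s * s = 1) (c : R) :
    (a - c • s) * (a + c • s) = a * a - algebraMap R A (c ^ 2) := by
  rw [← (has.smul_right c).mul_self_sub_mul_self_eq', smul_mul_smul, hs,
    Algebra.algebraMap_eq_smul_one, sq]

section CStarAlgebra

variable {A : Type*} [CStarAlgebra A]

/-- This is the junk value `0` unless the step function is continuous on the spectrum,
e.g. when `0 ∉ spectrum ℝ a`. -/
noncomputable def posSpectralProj (a : A) : A :=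
  cfc (fun x : ℝ => if 0 < x then (1 : ℝ) else 0) a

variable {a : A}

lemma isStarProjection_posSpectralProj (h0 : (0 : ℝ) ∉ spectrum ℝ a) :
    IsStarProjection (posSpectralProj a) where
  isIdempotentElem := by
    have hf := continuousOn_ite_pos_of_zero_notMem h0 1 0
    rw [IsIdempotentElem, posSpectralProj, ← cfc_mul _ _ a hf hf]
    exact cfc_congr fun x _ => by split_ifs <;> norm_num
  isSelfAdjoint := cfc_predicate _ a

lemma commute_posSpectralProj (ha : IsSelfAdjoint a) : Commute a (posSpectralProj a) := by
  have := cfc_commute_cfc (fun x : ℝ => x) (fun x : ℝ => if 0 < x then (1 : ℝ) else 0) a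
  rwa [cfc_id' ℝ a ha] at this

lemma isUnit_add_smul_two_mul_posSpectralProj_sub_one (ha : IsSelfAdjoint a)
    (h0 : (0 : ℝ) ∉ spectrum ℝ a) {c : ℝ} (hc : 0 ≤ c) :
    IsUnit (a + c • (2 * posSpectralProj a - 1)) := by
  have hf := continuousOn_ite_pos_of_zero_notMem h0 1 0
  have hcfc : cfc (fun x : ℝ => x + c * (2 * (if 0 < x then 1 else 0) - 1)) a
      = a + c • (2 * posSpectralProj a - 1) := by
    rw [cfc_add .., cfc_id' ℝ a, cfc_const_mul .., cfc_sub .., cfc_const_mul .., cfc_const_one ℝ a,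
      ofNat_smul_eq_nsmul, nsmul_eq_mul, Nat.cast_ofNat, posSpectralProj]
  rw [← hcfc, isUnit_cfc_iff _ a]
  intro x hx
  split_ifs with hpos
  · nlinarith
  · have : x < 0 := lt_of_le_of_ne (not_lt.mp hpos) (ne_of_mem_of_not_mem hx h0)
    nlinarith

variable [PartialOrder A] [StarOrderedRing A]

lemma isUnit_of_mul_self_eq_algebraMap_add {b : A} {r : ℝ} (hr : 0 < r) (hb : 0 ≤ b)
    (h : a * a = algebraMap ℝ A r + b) : IsUnit a :=
  isUnit_mul_self_iff.mp (h ▸ ((isStrictlyPositive_algebraMap hr).add_nonneg hb).isUnit)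

theorem IsSelfAdjoint.exists_isStarProjection_eq_smul_sub_smul_add_mul_unit
    (ha : IsSelfAdjoint a) {b : A} (hb : 0 ≤ b) {c : ℝ} (hc : 0 < c)
    (h : a * a = algebraMap ℝ A (c ^ 2) + b) :
    ∃ (p : A) (u : Aˣ), IsStarProjection p ∧ a = c • p - c • (1 - p) + b * u := by
  have h0 : (0 : ℝ) ∉ spectrum ℝ a :=
    spectrum.zero_notMem ℝ (isUnit_of_mul_self_eq_algebraMap_add (pow_pos hc 2) hb h)
  have hp := isStarProjection_posSpectralProj h0
  set p := posSpectralProj a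
  have hs : (2 * p - 1) * (2 * p - 1) = 1 := by
    have hpp : p * p = p := hp.isIdempotentElem
    calc (2 * p - 1) * (2 * p - 1) = 4 * (p * p - p) + 1 := by noncomm_ring
      _ = 1 := by rw [hpp, sub_self, mul_zero, zero_add]
  have has : Commute a (2 * p - 1) :=
    ((Commute.ofNat_right a 2).mul_right (commute_posSpectralProj ha)).sub_right
      (Commute.one_right a)
  obtain ⟨w, hw⟩ := isUnit_add_smul_two_mul_posSpectralProj_sub_one ha h0 hc.le
  have hfactor : (a - c • (2 * p - 1)) * w = b := by
    rw [hw, has.sub_smul_mul_add_smul hs c, h, add_sub_cancel_left]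
  refine ⟨p, w⁻¹, hp, ?_⟩
  calc a = c • (2 * p - 1) + (a - c • (2 * p - 1)) := by abel
    _ = c • p - c • (1 - p) + b * ↑w⁻¹ := by
      rw [← hfactor, Units.mul_inv_cancel_right, ← smul_sub]
      congr 2
      noncomm_ring

end CStarAlgebra

/-- Abstract operator-theoretic core of Theorem 4.9: if `T` is bounded self-adjoint,
`A` is compact self-adjoint and `T ∘ T = 16·I + A ∘ A`, then `T = 4P₊ - 4P₋ + K` with
complementary orthogonal projections `P₊, P₋` and a compact self-adjoint `K`. -/
theorem stmt_0 {H : Type*} [NormedAddCommGroup H] [InnerProductSpace ℂ H] [CompleteSpace H]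
    (T A : H →L[ℂ] H) (hT : IsSelfAdjoint T) (hAsa : IsSelfAdjoint A)
    (hAc : IsCompactOperator (⇑A))
    (hTA : T ∘L T = (16 : ℂ) • (1 : H →L[ℂ] H) + A ∘L A) :
    ∃ Pp Pm K : H →L[ℂ] H,
      IsSelfAdjoint Pp ∧ IsSelfAdjoint Pm ∧
      Pp ∘L Pp = Pp ∧ Pm ∘L Pm = Pm ∧
      Pp + Pm = 1 ∧ Pp ∘L Pm = 0 ∧
      IsSelfAdjoint K ∧ IsCompactOperator (⇑K) ∧
      T = (4 : ℂ) • Pp - (4 : ℂ) • Pm + K := by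
  have hA2 : 0 ≤ A * A := by simpa only [hAsa.star_eq] using star_mul_self_nonneg A
  have hT2 : T * T = algebraMap ℝ (H →L[ℂ] H) (4 ^ 2) + A * A := by
    rw [ContinuousLinearMap.mul_def, ContinuousLinearMap.mul_def, hTA,
      Algebra.algebraMap_eq_smul_one, ← Complex.coe_smul]
    norm_num
  obtain ⟨p, u, hp, hTp⟩ :=
    hT.exists_isStarProjection_eq_smul_sub_smul_add_mul_unit hA2 (by norm_num : (0 : ℝ) < 4) hT2
  simp only [← Complex.coe_smul, Complex.ofReal_ofNat] at hTp
  have hK : A * A * ↑u = T - ((4 : ℂ) • p - (4 : ℂ) • (1 - p)) := by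
    rw [eq_sub_iff_add_eq', ← hTp]
  refine ⟨p, 1 - p, A * A * ↑u, hp.isSelfAdjoint, hp.one_sub.isSelfAdjoint, hp.isIdempotentElem,
    hp.one_sub.isIdempotentElem, add_sub_cancel p 1, hp.mul_one_sub_self, ?_, ?_, hTp⟩
  · rw [hK]
    exact hT.sub (((IsSelfAdjoint.ofNat 4).smul hp.isSelfAdjoint).sub
      ((IsSelfAdjoint.ofNat 4).smul hp.one_sub.isSelfAdjoint))
  · rw [ContinuousLinearMap.mul_def, ContinuousLinearMap.mul_def]
    exact (hAc.comp_clm A).comp_clm _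
end

section
/- Let H be a complex Hilbert space, let T and A be bounded self-adjoint operators on H with T ∘ T = 16·I + A ∘ A, and suppose there exists a bounded bijective operator J on H with J ∘ T = −T ∘ J. Then σ(T) = {μ ∈ ℂ : there exists λ ∈ σ(A) with μ = √(16 + λ²) or μ = −√(16 + λ²)}. -/
/-!
Conjugation by `J` carries `T` to `-T`, so `σ(T)` is symmetric about `0`. By the spectral mapping
theorem for the polynomials `X²` and `16 + X²`, the identity `T² = 16 + A²` says that the squares of
the points of `σ(T)` are exactly the numbers `16 + λ²`, `λ ∈ σ(A)`. Since both spectra are real,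
each such `16 + λ²` is the square of some real `μ ∈ σ(T)`, i.e. `μ = ±√(16 + λ²)`, and symmetry
puts both signs into `σ(T)`.
-/

open Polynomial

theorem spectrum_neg_eq_of_isUnit_of_mul_eq_neg {R A : Type*} [CommSemiring R] [Ring A]
    [Algebra R A] {a u : A} (hu : IsUnit u) (hua : u * a = -(a * u)) :
    spectrum R (-a) = spectrum R a := by
  obtain ⟨u, rfl⟩ := hu
  have hconj : (u : A) * a * ↑u⁻¹ = -a := by
    rw [hua, neg_mul, mul_assoc, u.mul_inv, mul_one]
  rw [← hconj, spectrum.units_conjugate]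

theorem spectrum_sq_image_eq_of_mul_self_eq {𝕜 A : Type*} [Field 𝕜] [IsAlgClosed 𝕜] [Ring A]
    [Algebra 𝕜 A] {a b : A} (c : 𝕜) (h : a * a = c • 1 + b * b) :
    (· ^ 2) '' spectrum 𝕜 a = (fun k => c + k ^ 2) '' spectrum 𝕜 b := by
  have haeval : aeval b (C c + X ^ 2) = c • 1 + b * b := by
    simp [sq, Algebra.algebraMap_eq_smul_one]
  have hdeg : 0 < degree (C c + X ^ 2 : 𝕜[X]) := by
    rw [add_comm, degree_add_C (by simp)]; simp
  rw [← spectrum.map_pow_of_pos a two_pos, sq, h, ← haeval,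
    spectrum.map_polynomial_aeval_of_degree_pos b _ hdeg]
  simp

theorem Real.eq_sqrt_or_eq_neg_sqrt_of_sq_eq {x r : ℝ} (h : x ^ 2 = r) :
    x = √r ∨ x = -√r :=
  eq_or_eq_neg_of_sq_eq_sq x (√r) (by rw [Real.sq_sqrt (h ▸ sq_nonneg x), h])

theorem eq_setOf_sqrt_of_sq_image_eq {S B : Set ℂ} {c : ℝ}
    (hS : S ⊆ Set.range ((↑) : ℝ → ℂ)) (hB : B ⊆ Set.range ((↑) : ℝ → ℂ)) (hneg : -S = S)
    (hsq : (· ^ 2) '' S = (fun k => (c : ℂ) + k ^ 2) '' B) :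
    S = {μ : ℂ | ∃ l : ℝ, (l : ℂ) ∈ B ∧
      (μ = (√(c + l ^ 2) : ℝ) ∨ μ = -(√(c + l ^ 2) : ℝ))} := by
  have hneg_mem : ∀ {z}, z ∈ S → -z ∈ S := fun hz => by rwa [← Set.neg_mem_neg, hneg] at hz
  ext μ
  constructor
  · intro hμ
    obtain ⟨x, rfl⟩ := hS hμ
    obtain ⟨z, hz, hzx⟩ : (x : ℂ) ^ 2 ∈ (fun k => (c : ℂ) + k ^ 2) '' B :=
      hsq ▸ ⟨x, hμ, rfl⟩
    obtain ⟨l, rfl⟩ := hB hz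
    have hx : x ^ 2 = c + l ^ 2 := by
      beta_reduce at hzx; exact_mod_cast hzx.symm
    exact ⟨l, hz, by rcases Real.eq_sqrt_or_eq_neg_sqrt_of_sq_eq hx with h | h <;> simp [h]⟩
  · rintro ⟨l, hl, hμ⟩
    obtain ⟨ν, hν, hνl⟩ : ((c + l ^ 2 : ℝ) : ℂ) ∈ (· ^ 2) '' S :=
      hsq ▸ ⟨l, hl, by push_cast; rfl⟩
    obtain ⟨x, rfl⟩ := hS hν
    have hx : x ^ 2 = c + l ^ 2 := by
      beta_reduce at hνl; exact_mod_cast hνl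
    have hboth : ((√(c + l ^ 2) : ℝ) : ℂ) ∈ S ∧ -((√(c + l ^ 2) : ℝ) : ℂ) ∈ S := by
      rcases Real.eq_sqrt_or_eq_neg_sqrt_of_sq_eq hx with h | h
      · rw [h] at hν
        exact ⟨hν, hneg_mem hν⟩
      · rw [h, Complex.ofReal_neg] at hν
        exact ⟨by simpa using hneg_mem hν, hν⟩
    rcases hμ with rfl | rfl
    exacts [hboth.1, hboth.2]

theorem IsSelfAdjoint.spectrum_subset_range_ofReal {A : Type*} [CStarAlgebra A] {a : A}
    (ha : IsSelfAdjoint a) : spectrum ℂ a ⊆ Set.range ((↑) : ℝ → ℂ) :=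
  fun _ hz => ⟨_, (ha.mem_spectrum_eq_re hz).symm⟩

/-- Spectral equality of Step 1 of the proof of Theorem 4.9: if `T, A` are bounded
self-adjoint with `T ∘ T = 16·I + A ∘ A` and there is a bounded bijective `J`
anticommuting with `T`, then `σ(T) = {±√(16 + λ²) : λ ∈ σ(A)}` (note `σ(A) ⊆ ℝ`). -/
theorem stmt_2 {H : Type*} [NormedAddCommGroup H] [InnerProductSpace ℂ H] [CompleteSpace H]
    (T A : H →L[ℂ] H) (hT : IsSelfAdjoint T) (hA : IsSelfAdjoint A)
    (hTA : T ∘L T = (16 : ℂ) • (1 : H →L[ℂ] H) + A ∘L A)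
    (J : H →L[ℂ] H) (hJ : Function.Bijective J)
    (hJT : J ∘L T = -(T ∘L J)) :
    spectrum ℂ T = {μ : ℂ | ∃ l : ℝ, (l : ℂ) ∈ spectrum ℂ A ∧
      (μ = (Real.sqrt (16 + l ^ 2) : ℝ) ∨ μ = -(Real.sqrt (16 + l ^ 2) : ℝ))} := by
  have hneg : -spectrum ℂ T = spectrum ℂ T := by
    rw [spectrum.neg_eq]
    exact spectrum_neg_eq_of_isUnit_of_mul_eq_neg
      (ContinuousLinearMap.isUnit_iff_bijective.mpr hJ) hJT
  have hsq := spectrum_sq_image_eq_of_mul_self_eq ((16 : ℝ) : ℂ) hTA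
  exact eq_setOf_sqrt_of_sq_image_eq hT.spectrum_subset_range_ofReal
    hA.spectrum_subset_range_ofReal hneg hsq
end

section
/- Let H be a complex Hilbert space and let A be a compact self-adjoint operator on H. Let S be the non-negative self-adjoint square root of 16·I + A ∘ A (obtained via the continuous functional calculus). Then S − 4·I is a non-negative, self-adjoint, compact operator on H, and ‖(S − 4·I)x‖ ≤ (1/8)·‖A(Ax)‖ for every x ∈ H. -/
/-!
Since `A * A ≥ 0`, we have `S * S ≥ 16`, and operator monotonicity of the square root gives
`S ≥ 4`. Hence `S + 4 ≥ 8` is invertible with `‖(S + 4)⁻¹‖ ≤ 1/8`, and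
`S - 4 = (S + 4)⁻¹ * (A * A)`, which is compact and satisfies the norm bound.
-/

open Ring

namespace CStarAlgebra

variable {A : Type*} [CStarAlgebra A] [PartialOrder A] [StarOrderedRing A]

lemma algebraMap_le_of_mul_self_eq {s b : A} {c : ℝ} (hc : 0 ≤ c) (hs : 0 ≤ s)
    (hb : 0 ≤ b) (h : s * s = algebraMap ℝ A (c ^ 2) + b) : algebraMap ℝ A c ≤ s := by
  have hc' : 0 ≤ algebraMap ℝ A c := algebraMap_nonneg A hc
  calc algebraMap ℝ A c = CFC.sqrt (algebraMap ℝ A c * algebraMap ℝ A c) :=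
        (CFC.sqrt_mul_self _ hc').symm
    _ ≤ CFC.sqrt (s * s) := by
        apply CFC.sqrt_le_sqrt
        rw [h, ← map_mul, ← sq]
        exact le_add_of_nonneg_right hb
    _ = s := CFC.sqrt_mul_self s hs

lemma norm_ringInverse_le_of_algebraMap_le {a : A} {c : ℝ} (hc : 0 < c)
    (h : algebraMap ℝ A c ≤ a) : ‖a⁻¹ʳ‖ ≤ c⁻¹ := by
  have hc' : IsStrictlyPositive (algebraMap ℝ A c) := isStrictlyPositive_algebraMap hc
  have ha : IsStrictlyPositive a := hc'.of_le h
  have hinv : (algebraMap ℝ A c)⁻¹ʳ = algebraMap ℝ A c⁻¹ := by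
    rw [← mul_one (algebraMap ℝ A c)⁻¹ʳ, inverse_mul_eq_iff_eq_mul _ _ _ hc'.isUnit, ← map_mul,
      mul_inv_cancel₀ hc.ne', map_one]
  rw [norm_le_iff_le_algebraMap _ (inv_nonneg.2 hc.le) ha.ringInverse.nonneg, ← hinv]
  exact ringInverse_le_ringInverse h hc'

lemma sub_algebraMap_eq_ringInverse_mul {s b : A} {c : ℝ} (hc : 0 < c)
    (hcs : algebraMap ℝ A c ≤ s) (h : s * s = algebraMap ℝ A (c ^ 2) + b) :
    s - algebraMap ℝ A c = (s + algebraMap ℝ A c)⁻¹ʳ * b := by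
  have hunit : IsUnit (s + algebraMap ℝ A c) :=
    ((isStrictlyPositive_algebraMap hc).of_le hcs).add_nonneg (algebraMap_nonneg A hc.le) |>.isUnit
  rw [eq_comm, inverse_mul_eq_iff_eq_mul _ _ _ hunit, add_mul, mul_sub, mul_sub,
    Algebra.commutes, ← map_mul, ← sq c, h]
  abel

end CStarAlgebra

/-- Abstract content of the operator `K̃` from (4.18) and the estimate (4.19) in the proof of
Theorem 4.9: if `A` is compact self-adjoint and `S` is the non-negative self-adjoint square
root of `16·I + A ∘ A`, then `S - 4·I` is non-negative, self-adjoint and compact, and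
`‖(S - 4·I)x‖ ≤ (1/8)‖A(Ax)‖` for every `x`. -/
theorem stmt_5 {H : Type*} [NormedAddCommGroup H] [InnerProductSpace ℂ H] [CompleteSpace H]
    (A S : H →L[ℂ] H) (hA : IsSelfAdjoint A) (hAc : IsCompactOperator (⇑A))
    (hSpos : S.IsPositive)
    (hSsq : S ∘L S = (16 : ℂ) • (1 : H →L[ℂ] H) + A ∘L A) :
    (S - (4 : ℂ) • (1 : H →L[ℂ] H)).IsPositive ∧
    IsSelfAdjoint (S - (4 : ℂ) • (1 : H →L[ℂ] H)) ∧
    IsCompactOperator (⇑(S - (4 : ℂ) • (1 : H →L[ℂ] H))) ∧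
    ∀ x : H, ‖(S - (4 : ℂ) • (1 : H →L[ℂ] H)) x‖ ≤ (1 / 8) * ‖A (A x)‖ := by
  have h4 : (4 : ℂ) • (1 : H →L[ℂ] H) = algebraMap ℝ _ 4 := by
    rw [Algebra.algebraMap_eq_smul_one, ← Complex.coe_smul]; norm_num
  have h16 : (16 : ℂ) • (1 : H →L[ℂ] H) = algebraMap ℝ _ (4 ^ 2) := by
    rw [Algebra.algebraMap_eq_smul_one, ← Complex.coe_smul]; norm_num
  have hsq : S * S = algebraMap ℝ _ (4 ^ 2) + A * A := h16 ▸ hSsq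
  have h4S : algebraMap ℝ _ 4 ≤ S :=
    CStarAlgebra.algebraMap_le_of_mul_self_eq (by norm_num)
      ((ContinuousLinearMap.nonneg_iff_isPositive S).2 hSpos) hA.mul_self_nonneg hsq
  have h8S : algebraMap ℝ (H →L[ℂ] H) 8 ≤ S + algebraMap ℝ _ 4 := by
    rw [show (8 : ℝ) = 4 + 4 by norm_num, map_add]
    exact add_le_add_left h4S _
  have hT : S - algebraMap ℝ _ 4 = (S + algebraMap ℝ _ 4)⁻¹ʳ * (A * A) :=
    CStarAlgebra.sub_algebraMap_eq_ringInverse_mul (by norm_num) h4S hsq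
  have hT0 : 0 ≤ S - algebraMap ℝ _ 4 := sub_nonneg.2 h4S
  rw [h4]
  refine ⟨(ContinuousLinearMap.nonneg_iff_isPositive _).1 hT0, hT0.isSelfAdjoint, ?_, fun x => ?_⟩
  · rw [hT]
    exact (hAc.comp_clm A).clm_comp _
  · calc ‖(S - algebraMap ℝ _ 4) x‖ ≤ ‖(S + algebraMap ℝ _ 4)⁻¹ʳ‖ * ‖A (A x)‖ := by
          rw [hT]; exact ContinuousLinearMap.le_opNorm _ (A (A x))
      _ ≤ 1 / 8 * ‖A (A x)‖ := by
          gcongr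
          simpa using CStarAlgebra.norm_ringInverse_le_of_algebraMap_le (by norm_num) h8S
end

section
/- Let H be a complex Hilbert space, let T be a bounded self-adjoint operator on H and let A be a compact self-adjoint operator on H with T ∘ T = 16·I + A ∘ A. Suppose additionally that J is a bounded self-adjoint operator on H with J ∘ J = I and J ∘ T = −T ∘ J. Then there exist bounded self-adjoint idempotent operators P₊ and P₋ on H with P₊ + P₋ = I and P₊ ∘ P₋ = 0, and a compact self-adjoint operator K on H, such that T = 4·P₊ − 4·P₋ + K, and moreover J ∘ P₊ ∘ J = P₋ and J ∘ K ∘ J = −K. -/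
/-!
Since `T² - 16 = A² ≥ 0`, the spectrum of `T` avoids `(-4, 4)`, so `S = T / |T|` is given by the
continuous functional calculus and is a self-adjoint involution; take `P₊ = (1 + S) / 2` and
`P₋ = 1 - P₊`. The remainder `K = T - 4S` equals `(T² - 16) g(T) = A² g(T)` with
`g(x) = x / (|x| (|x| + 4))`, hence is compact. Conjugation by `J` is a continuous
⋆-automorphism sending `T` to `-T`; it commutes with the functional calculus, so it sends `S`
to the sign of `-T`, which is `-S`. This swaps `P₊` and `P₋` and negates `K`.
-/

section CStarAlgebra

variable {A : Type*} [CStarAlgebra A]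

lemma IsSelfAdjoint.le_sq_of_mem_spectrum [PartialOrder A] [StarOrderedRing A]
    {a b : A} {c x : ℝ} (ha : IsSelfAdjoint a) (hb : 0 ≤ b) (h : a ^ 2 = algebraMap ℝ A c + b)
    (hx : x ∈ spectrum ℝ a) : c ≤ x ^ 2 := by
  have hx2 : x ^ 2 ∈ spectrum ℝ (a ^ 2) := by
    rw [← cfc_pow_id (R := ℝ) a 2, cfc_map_spectrum (fun y : ℝ => y ^ 2) a]
    exact ⟨x, hx, rfl⟩
  rw [h, ← sub_add_cancel (x ^ 2) c, spectrum.add_mem_iff, neg_add_cancel_left] at hx2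
  linarith [spectrum_nonneg_of_nonneg hb hx2]

/-- Only meaningful when `0 ∉ spectrum ℝ a`: otherwise `x / |x|` is discontinuous on the
spectrum and `cfc` returns `0`. -/
noncomputable def cfcSign (a : A) : A := cfc (fun x : ℝ => x / |x|) a

lemma continuousOn_div_abs : ContinuousOn (fun x : ℝ => x / |x|) {0}ᶜ :=
  continuousOn_id.div continuous_abs.continuousOn fun _ hx => abs_ne_zero.mpr hx

variable {a : A}

lemma isSelfAdjoint_cfcSign : IsSelfAdjoint (cfcSign a) := cfc_predicate _ a

lemma cfcSign_mul_self (ha : IsSelfAdjoint a) (h0 : 0 ∉ spectrum ℝ a) :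
    cfcSign a * cfcSign a = 1 := by
  have hf := continuousOn_div_abs.mono (Set.subset_compl_singleton_iff.mpr h0)
  rw [cfcSign, ← cfc_mul _ _ a hf hf, ← cfc_one ℝ a]
  refine cfc_congr fun x hx => ?_
  have : |x| ≠ 0 := abs_ne_zero.mpr (ne_of_mem_of_not_mem hx h0)
  simp only [Pi.one_apply]
  field_simp
  exact (sq_abs x).symm

lemma cfcSign_neg (ha : IsSelfAdjoint a) (h0 : 0 ∉ spectrum ℝ a) :
    cfcSign (-a) = -cfcSign a := by
  have hf : ContinuousOn (fun x : ℝ => x / |x|) ((-·) '' spectrum ℝ a) :=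
    continuousOn_div_abs.mono <| by
      rintro _ ⟨y, hy, rfl⟩
      simpa using ne_of_mem_of_not_mem hy h0
  rw [cfcSign, cfcSign, ← cfc_comp_neg _ a hf, ← cfc_neg]
  exact cfc_congr fun x _ => by simp [neg_div]

lemma StarAlgHom.map_cfcSign {B : Type*} [CStarAlgebra B] (φ : A →⋆ₐ[ℝ] B)
    (hφ : Continuous φ) (ha : IsSelfAdjoint a) (h0 : 0 ∉ spectrum ℝ a) :
    φ (cfcSign a) = cfcSign (φ a) :=
  φ.map_cfc _ a (continuousOn_div_abs.mono (Set.subset_compl_singleton_iff.mpr h0)) hφ ha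
    (ha.map φ)

lemma sub_smul_cfcSign (ha : IsSelfAdjoint a) (h0 : 0 ∉ spectrum ℝ a) {r : ℝ} (hr : 0 ≤ r) :
    a - r • cfcSign a =
      (a ^ 2 - algebraMap ℝ A (r ^ 2)) * cfc (fun x : ℝ => x / (|x| * (|x| + r))) a := by
  have hne : ∀ x ∈ spectrum ℝ a, x ≠ 0 := fun x hx => ne_of_mem_of_not_mem hx h0
  have hsign := continuousOn_div_abs.mono (Set.subset_compl_singleton_iff.mpr h0)
  have hm : ContinuousOn (fun x : ℝ => x / (|x| * (|x| + r))) (spectrum ℝ a) :=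
    continuousOn_id.div (by fun_prop) fun x hx => by
      have := hne x hx
      positivity
  have hlhs : a - r • cfcSign a = cfc (fun x : ℝ => x - r * (x / |x|)) a := by
    rw [cfc_sub _ _ a, cfc_id' ℝ a, cfc_const_mul r _ a hsign, cfcSign]
  have hrhs : (a ^ 2 - algebraMap ℝ A (r ^ 2)) * cfc (fun x : ℝ => x / (|x| * (|x| + r))) a =
      cfc (fun x : ℝ => (x ^ 2 - r ^ 2) * (x / (|x| * (|x| + r)))) a := by
    rw [cfc_mul _ _ a, cfc_sub _ _ a, cfc_pow_id (R := ℝ) a 2, cfc_const (r ^ 2) a]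
  rw [hlhs, hrhs]
  refine cfc_congr fun x hx => ?_
  have hx : |x| ≠ 0 := abs_ne_zero.mpr (hne x hx)
  have hxr : |x| + r ≠ 0 := by positivity
  rw [← sq_abs x]
  field_simp
  ring

end CStarAlgebra

lemma IsSelfAdjoint.isStarProjection_half_one_add {R : Type*} [Ring R] [StarRing R]
    [Algebra ℝ R] [StarModule ℝ R] {s : R} (hs : IsSelfAdjoint s) (hs2 : s * s = 1) :
    IsStarProjection ((2⁻¹ : ℝ) • (1 + s)) where
  isIdempotentElem := by
    rw [IsIdempotentElem, smul_mul_smul_comm, add_mul, mul_add, mul_add, hs2]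
    simp only [one_mul, mul_one]
    module
  isSelfAdjoint := (IsSelfAdjoint.all (2⁻¹ : ℝ)).smul ((IsSelfAdjoint.one R).add hs)

/-- Theorem 4.9 together with Remark 4.10 in abstract form: under the hypotheses of the
decomposition `T = 4P₊ - 4P₋ + K`, if additionally `J` is a self-adjoint involution
anticommuting with `T`, then the projections can be chosen with `J P₊ J = P₋` and
`J K J = -K`. -/
theorem stmt_6 {H : Type*} [NormedAddCommGroup H] [InnerProductSpace ℂ H] [CompleteSpace H]
    (T A : H →L[ℂ] H) (hT : IsSelfAdjoint T) (hAsa : IsSelfAdjoint A)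
    (hAc : IsCompactOperator (⇑A))
    (hTA : T ∘L T = (16 : ℂ) • (1 : H →L[ℂ] H) + A ∘L A)
    (J : H →L[ℂ] H) (hJsa : IsSelfAdjoint J) (hJ2 : J ∘L J = 1)
    (hJT : J ∘L T = -(T ∘L J)) :
    ∃ Pp Pm K : H →L[ℂ] H,
      IsSelfAdjoint Pp ∧ IsSelfAdjoint Pm ∧
      Pp ∘L Pp = Pp ∧ Pm ∘L Pm = Pm ∧
      Pp + Pm = 1 ∧ Pp ∘L Pm = 0 ∧
      IsSelfAdjoint K ∧ IsCompactOperator (⇑K) ∧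
      T = (4 : ℂ) • Pp - (4 : ℂ) • Pm + K ∧
      J ∘L Pp ∘L J = Pm ∧ J ∘L K ∘L J = -K := by
  have hT2 : T ^ 2 = algebraMap ℝ (H →L[ℂ] H) (4 ^ 2) + A * A := by
    rw [pow_two, Algebra.algebraMap_eq_smul_one, ← Complex.coe_smul,
      show ((4 ^ 2 : ℝ) : ℂ) = 16 by norm_num]
    exact hTA
  have hA2 : 0 ≤ A * A := by simpa only [hAsa.star_eq] using star_mul_self_nonneg A
  have h0 : 0 ∉ spectrum ℝ T := fun h => by
    have := hT.le_sq_of_mem_spectrum hA2 hT2 h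
    norm_num at this
  set S := cfcSign T
  have hJu : J ∈ unitary (H →L[ℂ] H) := Unitary.mem_iff.mpr <| by
    rw [hJsa.star_eq]
    exact ⟨hJ2, hJ2⟩
  set φ := (Unitary.conjStarAlgAut ℝ _ ⟨J, hJu⟩).toStarAlgHom
  have hφ (X : H →L[ℂ] H) : J ∘L X ∘L J = φ X := by
    show J * (X * J) = J * X * star J
    rw [hJsa.star_eq, mul_assoc]
  have hφT : φ T = -T := by
    rw [← hφ, ← ContinuousLinearMap.comp_assoc, hJT, ContinuousLinearMap.neg_comp,
      ContinuousLinearMap.comp_assoc, hJ2]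
    exact mul_one (-T)
  have hφc : Continuous φ := (continuous_const.mul continuous_id).mul continuous_const
  have hφS : φ S = -S := by rw [φ.map_cfcSign hφc hT h0, hφT, cfcSign_neg hT h0]
  have hP := isSelfAdjoint_cfcSign.isStarProjection_half_one_add (cfcSign_mul_self hT h0)
  refine ⟨(2⁻¹ : ℝ) • (1 + S), 1 - (2⁻¹ : ℝ) • (1 + S), T - (4 : ℝ) • S,
    hP.isSelfAdjoint, hP.one_sub.isSelfAdjoint, hP.isIdempotentElem, hP.one_sub.isIdempotentElem,
    add_sub_cancel _ _, hP.mul_one_sub_self,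
    hT.sub ((IsSelfAdjoint.all _).smul isSelfAdjoint_cfcSign), ?_, by module, ?_, ?_⟩
  · rw [sub_smul_cfcSign hT h0 zero_le_four, hT2, add_sub_cancel_left, mul_assoc]
    exact hAc.comp_clm _
  · rw [hφ, map_smul, map_add, map_one, hφS]
    module
  · rw [hφ, map_sub, map_smul, hφT, hφS]
    module
end

section
/- Let α = (α₁, α₂, α₃) ∈ ℕ³ be a multi-index and let k ∈ ℤ be such that m := |α| + 2k + 1 ≥ 1, where |α| = α₁ + α₂ + α₃, and let f : ℝ³ ∖ {0} → ℝ be defined by f(ζ) = ζ₁^{α₁} ζ₂^{α₂} ζ₃^{α₃} · ‖ζ‖^{2k−1}. Then the m-th iterated Fréchet derivative of f satisfies, for every ζ ∈ ℝ³ ∖ {0}, every t > 0 and all vectors v₁, …, v_m ∈ ℝ³: (i) D^m f(−ζ)(v₁, …, v_m) = −D^m f(ζ)(v₁, …, v_m), i.e. D^m f is an odd function of ζ, and (ii) D^m f(tζ)(v₁, …, v_m) = t^{−2} D^m f(ζ)(v₁, …, v_m), i.e. D^m f is positively homogeneous of degree −2 with respect to ζ. -/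
/-!
For every real `c`, `f (c • ζ) = c ^ |α| * |c| ^ (2k-1) * f ζ`. Since `c • ·` is a linear
automorphism for `c ≠ 0`, the chain rule `Dᵐ (f ∘ (c • ·)) = cᵐ • Dᵐ f ∘ (c • ·)` holds with no
smoothness assumption, so `cᵐ Dᵐ f (c • ζ) = c ^ |α| |c| ^ (2k-1) Dᵐ f ζ`. For `c = -1` the sign is
`(-1) ^ (m + |α|) = -1` because `m + |α| = 2(m - k) - 1`; for `c = t > 0` the factor is
`t ^ (|α| + 2k - 1 - m) = t ^ (-2)`.
-/

section

variable {𝕜 E F : Type*} [NontriviallyNormedField 𝕜] [NormedAddCommGroup E] [NormedSpace 𝕜 E]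
  [NormedAddCommGroup F] [NormedSpace 𝕜 F]

theorem iteratedFDeriv_comp_const_smul_of_ne_zero {c : 𝕜} (hc : c ≠ 0) (f : E → F) (n : ℕ)
    (x : E) :
    iteratedFDeriv 𝕜 n (fun y ↦ f (c • y)) x = c ^ n • iteratedFDeriv 𝕜 n f (c • x) := by
  let e : E ≃L[𝕜] E := ContinuousLinearEquiv.smulLeft (Units.mk0 c hc)
  ext v
  have h := e.iteratedFDerivWithin_comp_right f uniqueDiffOn_univ (Set.mem_univ (e x)) n
  simp only [Set.preimage_univ, iteratedFDerivWithin_univ] at h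
  rw [show (fun y ↦ f (c • y)) = f ∘ e from rfl, h]
  simpa [e] using (iteratedFDeriv 𝕜 n f (c • x)).map_smul_univ (fun _ ↦ c) v

theorem iteratedFDeriv_const_smul_field (a : 𝕜) (f : E → F) (n : ℕ) (x : E) :
    iteratedFDeriv 𝕜 n (fun y ↦ a • f y) x = a • iteratedFDeriv 𝕜 n f x := by
  rcases eq_or_ne a 0 with rfl | ha
  · simp
  · exact (ContinuousLinearEquiv.smulLeft (Units.mk0 a ha) : F ≃L[𝕜] F).iteratedFDeriv_comp_left

theorem iteratedFDeriv_smul_eq_of_map_smul {f : E → F} {c a : 𝕜} (hc : c ≠ 0)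
    (hf : ∀ y, f (c • y) = a • f y) (n : ℕ) (x : E) :
    c ^ n • iteratedFDeriv 𝕜 n f (c • x) = a • iteratedFDeriv 𝕜 n f x := by
  rw [← iteratedFDeriv_comp_const_smul_of_ne_zero hc, ← iteratedFDeriv_const_smul_field]
  simp_rw [hf]

end

theorem map_smul_of_eq_monomial_mul_norm_zpow {α : Fin 3 → ℕ} {k : ℤ}
    {f : EuclideanSpace ℝ (Fin 3) → ℝ}
    (hf : ∀ ζ : EuclideanSpace ℝ (Fin 3),
      f ζ = ζ 0 ^ α 0 * ζ 1 ^ α 1 * ζ 2 ^ α 2 * ‖ζ‖ ^ (2 * k - 1))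
    (c : ℝ) (ζ : EuclideanSpace ℝ (Fin 3)) :
    f (c • ζ) = (c ^ (α 0 + α 1 + α 2) * |c| ^ (2 * k - 1)) * f ζ := by
  simp only [hf, PiLp.smul_apply, smul_eq_mul, norm_smul, Real.norm_eq_abs, mul_pow, mul_zpow,
    pow_add]
  ring

theorem stmt_10_general (α : Fin 3 → ℕ) (k : ℤ) (m : ℕ)
    (hm : (m : ℤ) = (α 0 : ℤ) + (α 1 : ℤ) + (α 2 : ℤ) + 2 * k + 1)
    (f : EuclideanSpace ℝ (Fin 3) → ℝ)
    (hf : ∀ ζ : EuclideanSpace ℝ (Fin 3),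
      f ζ = ζ 0 ^ α 0 * ζ 1 ^ α 1 * ζ 2 ^ α 2 * ‖ζ‖ ^ (2 * k - 1)) :
    ∀ ζ : EuclideanSpace ℝ (Fin 3), ζ ≠ 0 →
      ∀ v : Fin m → EuclideanSpace ℝ (Fin 3),
        iteratedFDeriv ℝ m f (-ζ) v = -(iteratedFDeriv ℝ m f ζ v) ∧
        ∀ t : ℝ, 0 < t →
          iteratedFDeriv ℝ m f (t • ζ) v = t ^ (-2 : ℤ) * iteratedFDeriv ℝ m f ζ v := by
  intro ζ _ v
  have hscale (c : ℝ) (hc : c ≠ 0) : c ^ m * iteratedFDeriv ℝ m f (c • ζ) v =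
      (c ^ (α 0 + α 1 + α 2) * |c| ^ (2 * k - 1)) * iteratedFDeriv ℝ m f ζ v := by
    simpa using congr($(iteratedFDeriv_smul_eq_of_map_smul hc
      (map_smul_of_eq_monomial_mul_norm_zpow hf c) m ζ) v)
  refine ⟨?_, fun t ht ↦ ?_⟩
  · have hodd : Odd (m + (α 0 + α 1 + α 2)) := by
      rw [← Int.odd_coe_nat]; exact ⟨m - k - 1, by push_cast; linarith⟩
    have h := hscale (-1) (by norm_num)
    rw [neg_one_smul, abs_neg, abs_one, one_zpow, mul_one] at h
    calc iteratedFDeriv ℝ m f (-ζ) v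
        = (-1) ^ (m + m) * iteratedFDeriv ℝ m f (-ζ) v := by
          rw [Even.neg_one_pow ⟨m, rfl⟩, one_mul]
      _ = (-1) ^ (m + (α 0 + α 1 + α 2)) * iteratedFDeriv ℝ m f ζ v := by
        rw [pow_add, mul_assoc, h, ← mul_assoc, ← pow_add]
      _ = -iteratedFDeriv ℝ m f ζ v := by rw [hodd.neg_one_pow, neg_one_mul]
  · have h := hscale t ht.ne'
    rw [abs_of_pos ht, ← zpow_natCast, ← zpow_natCast, ← zpow_add₀ ht.ne'] at h
    rw [← mul_right_inj' (zpow_ne_zero (m : ℤ) ht.ne'), h, ← mul_assoc, ← zpow_add₀ ht.ne']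
    congr 2
    push_cast
    linarith

/-- Part of Lemma 4.2: the `m`-th iterated Fréchet derivative of
`f(ζ) = ζ^α ‖ζ‖^{2k-1}` (with `m = |α| + 2k + 1 ≥ 1`) is an odd function of `ζ` and
positively homogeneous of degree `-2` in `ζ`. -/
theorem stmt_10 (α : Fin 3 → ℕ) (k : ℤ) (m : ℕ) (hm1 : 1 ≤ m)
    (hm : (m : ℤ) = (α 0 : ℤ) + (α 1 : ℤ) + (α 2 : ℤ) + 2 * k + 1)
    (f : EuclideanSpace ℝ (Fin 3) → ℝ)
    (hf : ∀ ζ : EuclideanSpace ℝ (Fin 3),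
      f ζ = ζ 0 ^ α 0 * ζ 1 ^ α 1 * ζ 2 ^ α 2 * ‖ζ‖ ^ (2 * k - 1)) :
    ∀ ζ : EuclideanSpace ℝ (Fin 3), ζ ≠ 0 →
      ∀ v : Fin m → EuclideanSpace ℝ (Fin 3),
        iteratedFDeriv ℝ m f (-ζ) v = -(iteratedFDeriv ℝ m f ζ v) ∧
        ∀ t : ℝ, 0 < t →
          iteratedFDeriv ℝ m f (t • ζ) v = t ^ (-2 : ℤ) * iteratedFDeriv ℝ m f ζ v :=
  stmt_10_general α k m hm f hf
end

section
/- Let α = (α₁, α₂, α₃) ∈ ℕ³ be a multi-index and let k ∈ ℤ be such that m := |α| + 2k + 1 ≥ 1, where |α| = α₁ + α₂ + α₃, and let f : ℝ³ ∖ {0} → ℝ be defined by f(ζ) = ζ₁^{α₁} ζ₂^{α₂} ζ₃^{α₃} · ‖ζ‖^{2k−1}. Then for every orthonormal pair of vectors e₁, e₂ ∈ ℝ³ and all vectors ζ₁, …, ζ_m in the linear span of {e₁, e₂}, the integral ∫₀^{2π} D^m f(cos θ · e₁ + sin θ · e₂)(ζ₁, …, ζ_m) dθ equals 0. -/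
open Real Set

lemma aux_zpow (n : ℤ) {x : ℝ} (hx : x ≠ 0) :
    ContDiffAt ℝ (⊤ : ℕ∞) (fun t : ℝ => t ^ n) x := by
  cases n with
  | ofNat p =>
      simpa using (contDiff_id.pow p).contDiffAt (x := x)
  | negSucc p =>
      have : (fun t : ℝ => t ^ (Int.negSucc p)) = fun t : ℝ => (t ^ (p + 1))⁻¹ := by
        funext t; rw [zpow_negSucc]
      rw [this]
      exact ((contDiff_id.pow (p + 1)).contDiffAt (x := x)).inv (pow_ne_zero _ hx)

lemma aux_smooth (α : Fin 3 → ℕ) (k : ℤ) :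
    ContDiffOn ℝ (⊤ : ℕ∞)
      (fun ζ : EuclideanSpace ℝ (Fin 3) =>
        ζ 0 ^ α 0 * ζ 1 ^ α 1 * ζ 2 ^ α 2 * ‖ζ‖ ^ (2 * k - 1))
      {x : EuclideanSpace ℝ (Fin 3) | x ≠ 0} := by
  intro x hx
  apply ContDiffAt.contDiffWithinAt
  have hproj : ∀ i : Fin 3, ContDiffAt ℝ (⊤ : ℕ∞) (fun ζ : EuclideanSpace ℝ (Fin 3) => ζ i) x :=
    fun i => (EuclideanSpace.proj i : EuclideanSpace ℝ (Fin 3) →L[ℝ] ℝ).contDiff.contDiffAt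
  have hnorm : ContDiffAt ℝ (⊤ : ℕ∞) (fun ζ : EuclideanSpace ℝ (Fin 3) => ‖ζ‖ ^ (2 * k - 1)) x :=
    (aux_zpow (2 * k - 1) (norm_ne_zero_iff.2 hx)).comp x (contDiffAt_norm ℝ hx)
  exact ((((hproj 0).pow _).mul ((hproj 1).pow _)).mul ((hproj 2).pow _)).mul hnorm

lemma aux_neg {E : Type*} [NormedAddCommGroup E] [NormedSpace ℝ E]
    (f : E → ℝ) (hC : ContDiffOn ℝ (⊤ : ℕ∞) f {x : E | x ≠ 0}) (ε : ℝ)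
    (hodd : ∀ x, f (-x) = ε * f x) (m : ℕ) (x : E) (hx : x ≠ 0) (v : Fin m → E) :
    ε * iteratedFDeriv ℝ m f x v = (-1 : ℝ) ^ m * iteratedFDeriv ℝ m f (-x) v := by
  set s : Set E := {x : E | x ≠ 0} with hsdef
  have hs : IsOpen s := isOpen_ne
  have hu : UniqueDiffOn ℝ s := hs.uniqueDiffOn
  set g : E ≃L[ℝ] E := ContinuousLinearEquiv.neg ℝ with hgdef
  have hpre : (⇑g) ⁻¹' s = s := by
    ext y
    simp [hgdef, hsdef, neg_eq_zero]
  have hgx : g x ∈ s := by simpa [hgdef, hsdef, neg_eq_zero] using hx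
  have h1 := g.iteratedFDerivWithin_comp_right (f := f) hu hgx m
  rw [hpre] at h1
  have h2 : f ∘ ⇑g = ε • f := by
    funext y
    simp [Function.comp, hgdef, hodd y]
  rw [h2] at h1
  have h3 : iteratedFDerivWithin ℝ m (ε • f) s x = ε • iteratedFDerivWithin ℝ m f s x :=
    iteratedFDerivWithin_const_smul_apply ((hC x hx).of_le (mod_cast le_top)) hu hx
  rw [h3] at h1
  have h4 : iteratedFDerivWithin ℝ m f s x = iteratedFDeriv ℝ m f x :=
    iteratedFDerivWithin_of_isOpen m hs hx
  have h5 : iteratedFDerivWithin ℝ m f s (g x) = iteratedFDeriv ℝ m f (-x) := by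
    rw [iteratedFDerivWithin_of_isOpen m hs hgx]
    simp [hgdef]
  have h6 := congrArg (fun A => A v) h1
  simp only [ContinuousMultilinearMap.smul_apply,
    ContinuousMultilinearMap.compContinuousLinearMap_apply, h4, h5] at h6
  have h7 : (fun i => (g : E →L[ℝ] E) (v i)) = fun i => (-1 : ℝ) • v i := by
    funext i; simp [hgdef]
  rw [h7, (iteratedFDeriv ℝ m f (-x)).map_smul_univ (fun _ => (-1 : ℝ)) v] at h6
  simpa [smul_eq_mul] using h6


/-- The mean-value condition (iii) of Definition 4.1 for the kernel of Lemma 4.2: for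
`f(ζ) = ζ^α ‖ζ‖^{2k-1}` with `m = |α| + 2k + 1 ≥ 1`, any orthonormal pair `e₁, e₂` and
vectors `ζ₁, …, ζ_m` in their span, the integral of `D^m f` over the corresponding unit
circle vanishes. -/
theorem stmt_11 (α : Fin 3 → ℕ) (k : ℤ) (m : ℕ) (hm1 : 1 ≤ m)
    (hm : (m : ℤ) = (α 0 : ℤ) + (α 1 : ℤ) + (α 2 : ℤ) + 2 * k + 1)
    (f : EuclideanSpace ℝ (Fin 3) → ℝ)
    (hf : ∀ ζ : EuclideanSpace ℝ (Fin 3),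
      f ζ = ζ 0 ^ α 0 * ζ 1 ^ α 1 * ζ 2 ^ α 2 * ‖ζ‖ ^ (2 * k - 1))
    (e₁ e₂ : EuclideanSpace ℝ (Fin 3)) (he₁ : ‖e₁‖ = 1) (he₂ : ‖e₂‖ = 1)
    (he : (inner ℝ e₁ e₂ : ℝ) = 0)
    (v : Fin m → EuclideanSpace ℝ (Fin 3))
    (hv : ∀ i, v i ∈ Submodule.span ℝ ({e₁, e₂} : Set (EuclideanSpace ℝ (Fin 3)))) :
    ∫ θ in (0 : ℝ)..(2 * Real.pi),
      iteratedFDeriv ℝ m f (Real.cos θ • e₁ + Real.sin θ • e₂) v = 0 := by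
  have hfe : f = fun ζ : EuclideanSpace ℝ (Fin 3) =>
      ζ 0 ^ α 0 * ζ 1 ^ α 1 * ζ 2 ^ α 2 * ‖ζ‖ ^ (2 * k - 1) := funext hf
  have hC : ContDiffOn ℝ (⊤ : ℕ∞) f {x : EuclideanSpace ℝ (Fin 3) | x ≠ 0} := by
    rw [hfe]; exact aux_smooth α k
  set ε : ℝ := (-1 : ℝ) ^ (α 0 + α 1 + α 2) with hεdef
  have hodd : ∀ x, f (-x) = ε * f x := by
    intro x
    rw [hf, hf]
    have h0 : (-x) 0 = -(x 0) := rfl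
    have h1 : (-x) 1 = -(x 1) := rfl
    have h2 : (-x) 2 = -(x 2) := rfl
    rw [h0, h1, h2, norm_neg, neg_pow, neg_pow, neg_pow, hεdef, pow_add, pow_add]
    ring
  -- sign computation
  have hoddnat : Odd (m + (α 0 + α 1 + α 2)) := by
    rw [← Int.odd_coe_nat]
    push_cast
    rw [hm]
    exact ⟨(α 0 : ℤ) + α 1 + α 2 + k, by ring⟩
  have hsign : (-1 : ℝ) ^ m * ε = -1 := by
    rw [hεdef, ← pow_add]
    exact Odd.neg_one_pow hoddnat
  have hm2 : (-1 : ℝ) ^ m * (-1 : ℝ) ^ m = 1 := by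
    rw [← pow_add]
    exact Even.neg_one_pow ⟨m, rfl⟩
  have hkey : ∀ x : EuclideanSpace ℝ (Fin 3), x ≠ 0 →
      iteratedFDeriv ℝ m f (-x) v = - iteratedFDeriv ℝ m f x v := by
    intro x hx
    have h := aux_neg f hC ε hodd m x hx v
    calc iteratedFDeriv ℝ m f (-x) v
        = ((-1 : ℝ) ^ m * (-1 : ℝ) ^ m) * iteratedFDeriv ℝ m f (-x) v := by
          rw [hm2, one_mul]
      _ = (-1 : ℝ) ^ m * (ε * iteratedFDeriv ℝ m f x v) := by
          rw [mul_assoc, ← h]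
      _ = ((-1 : ℝ) ^ m * ε) * iteratedFDeriv ℝ m f x v := by ring
      _ = - iteratedFDeriv ℝ m f x v := by rw [hsign]; ring
  -- the circle
  set c : ℝ → EuclideanSpace ℝ (Fin 3) := fun θ => Real.cos θ • e₁ + Real.sin θ • e₂ with hcdef
  have hcnorm : ∀ θ, ‖c θ‖ = 1 := by
    intro θ
    have hsq : ‖c θ‖ ^ 2 = 1 := by
      rw [hcdef]
      rw [norm_add_sq_real, norm_smul, norm_smul, real_inner_smul_left, real_inner_smul_right,
        he, he₁, he₂]
      simp only [Real.norm_eq_abs, mul_one, mul_zero]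
      rw [sq_abs, sq_abs]
      linarith [Real.sin_sq_add_cos_sq θ]
    nlinarith [norm_nonneg (c θ), hsq]
  have hcne : ∀ θ, c θ ≠ 0 := fun θ => by
    intro h; have := hcnorm θ; rw [h] at this; simp at this
  set F : ℝ → ℝ := fun θ => iteratedFDeriv ℝ m f (c θ) v with hFdef
  have hccont : Continuous c := by
    exact (Real.continuous_cos.smul continuous_const).add
      (Real.continuous_sin.smul continuous_const)
  have hFcont : Continuous F := by
    have hs : IsOpen {x : EuclideanSpace ℝ (Fin 3) | x ≠ 0} := isOpen_ne
    have hFW : F = fun θ =>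
        iteratedFDerivWithin ℝ m f {x : EuclideanSpace ℝ (Fin 3) | x ≠ 0} (c θ) v := by
      funext θ
      rw [hFdef]
      rw [iteratedFDerivWithin_of_isOpen m hs (hcne θ)]
    rw [hFW]
    exact (continuous_eval_const v).comp
      ((hC.continuousOn_iteratedFDerivWithin (mod_cast le_top) hs.uniqueDiffOn).comp_continuous
        hccont (fun θ => hcne θ))
  have hanti : ∀ θ, F (θ + Real.pi) = - F θ := by
    intro θ
    have hcshift : c (θ + Real.pi) = -(c θ) := by
      rw [hcdef]
      simp only [Real.cos_add, Real.sin_add, Real.cos_pi, Real.sin_pi]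
      rw [show Real.cos θ * -1 - Real.sin θ * 0 = -Real.cos θ by ring,
        show Real.sin θ * -1 + Real.cos θ * 0 = -Real.sin θ by ring]
      rw [neg_smul, neg_smul, neg_add]
    rw [hFdef]
    simp only []
    rw [hcshift]
    exact hkey (c θ) (hcne θ)
  have hi1 : IntervalIntegrable F MeasureTheory.volume 0 Real.pi :=
    hFcont.intervalIntegrable _ _
  have hi2 : IntervalIntegrable F MeasureTheory.volume Real.pi (2 * Real.pi) :=
    hFcont.intervalIntegrable _ _
  have hsplit := intervalIntegral.integral_add_adjacent_intervals hi1 hi2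
  have hshift : ∫ θ in Real.pi..(2 * Real.pi), F θ = ∫ θ in (0 : ℝ)..Real.pi, F (θ + Real.pi) := by
    rw [intervalIntegral.integral_comp_add_right]
    norm_num [two_mul]
  have : ∫ θ in (0 : ℝ)..(2 * Real.pi), F θ = 0 := by
    rw [← hsplit, hshift]
    simp only [hanti]
    rw [intervalIntegral.integral_neg]
    ring
  exact this
end
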